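/- Let X, Y be real Banach spaces with a uniform homeomorphism φ:S(X)→S(Y), let Γ be a finitely generated group, S ∌ e a symmetric finite subset, H ≤ Γ a finite-index subgroup, and p ∈ [1,∞). Let Φ_p:S(ℓ_p(ℕ,X))→S(ℓ_p(ℕ,Y)) be the coordinatewise map (x_i)_i ↦ (φ̄(x_i))_i. Then for any upper modulus of continuity δ₁ ∈ M_{Φ_p} and δ₂ ∈ M_{Φ_p⁻¹}, with generalized inverses δ_j⁻¹(s) := inf{t ∈ [0,2] : δ_j(t) ≥ s}, one has κ_{X,p}(Γ,H,S) ≥ δ₁⁻¹( (1/2)·δ₂⁻¹(1/2)·κ_{Y,p}(Γ,H,S) ). -/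
import Mathlib


open scoped ENNReal

/-- The `(X,p)`-spectral gap of the Schreier coset graph `Sch(Γ,H,S)`. -/
noncomputable def lam1Sch (Γ : Type*) [Group Γ] (H : Subgroup Γ) [Fintype (Γ ⧸ H)]
    (S : Finset Γ) (X : Type*) [NormedAddCommGroup X] [NormedSpace ℝ X] (p : ℝ) : ℝ :=
  (1/2) * sInf {r : ℝ | ∃ f : Γ ⧸ H → X, (¬ ∀ v w, f v = f w) ∧
    r = (∑ v : Γ ⧸ H, ∑ s ∈ S, ‖f (s • v) - f v‖ ^ p) /
        (∑ v : Γ ⧸ H, ‖f v - (Fintype.card (Γ ⧸ H) : ℝ)⁻¹ • ∑ w : Γ ⧸ H, f w‖ ^ p)}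

/-- The `p`-displacement constant `κ_{X,p}(Γ,H,S)`, defined via the quasi-regular
representation of `Γ` on `ℓ_p(Γ/H, ℓ_p(ℕ,X))`. -/
noncomputable def dispConst (Γ : Type*) [Group Γ] (H : Subgroup Γ) [Fintype (Γ ⧸ H)]
    (S : Finset Γ) (X : Type*) [NormedAddCommGroup X] [NormedSpace ℝ X]
    (p : ℝ) [Fact (1 ≤ ENNReal.ofReal p)] : ℝ :=
  sInf {r : ℝ | ∃ ξ : Γ ⧸ H → lp (fun _ : ℕ => X) (ENNReal.ofReal p),
    ξ ≠ 0 ∧ (∑ v : Γ ⧸ H, ξ v) = 0 ∧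
    r = sSup {t : ℝ | ∃ s ∈ S,
      t = (∑ v : Γ ⧸ H, ‖ξ (s⁻¹ • v) - ξ v‖ ^ p) ^ (1/p) /
          (∑ v : Γ ⧸ H, ‖ξ v‖ ^ p) ^ (1/p)}}
open scoped ENNReal Classical

/-- The canonical extension by homogeneity of a map between unit spheres. -/
noncomputable def canExt {X Y : Type*} [NormedAddCommGroup X] [NormedSpace ℝ X]
    [NormedAddCommGroup Y] [NormedSpace ℝ Y]
    (φ : Metric.sphere (0:X) 1 → Metric.sphere (0:Y) 1) (x : X) : Y :=
  if hx : x = 0 then 0 else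
    ‖x‖ • (φ ⟨‖x‖⁻¹ • x, by
      rw [mem_sphere_zero_iff_norm, norm_smul, norm_inv, norm_norm,
        inv_mul_cancel₀ (norm_ne_zero_iff.mpr hx)]⟩ : Y)

/-- `δ` is an upper modulus of continuity of the map `ψ` between unit spheres. -/
def IsUpperModulus {X Y : Type*} [NormedAddCommGroup X] [NormedAddCommGroup Y]
    (ψ : Metric.sphere (0:X) 1 → Metric.sphere (0:Y) 1) (δ : ℝ → ℝ) : Prop :=
  (∀ s t, 0 ≤ s → s ≤ t → t ≤ 2 → δ s ≤ δ t) ∧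
  (∀ t, 0 ≤ t → t ≤ 2 → 0 ≤ δ t) ∧
  Filter.Tendsto δ (nhdsWithin 0 (Set.Ioi 0)) (nhds 0) ∧
  (∀ x₁ x₂ : Metric.sphere (0:X) 1, ‖(ψ x₁ : Y) - (ψ x₂ : Y)‖ ≤ δ ‖(x₁ : X) - (x₂ : X)‖)

/-- Generalized inverse `δ⁻¹(s) = inf {t ∈ [0,2] : δ(t) ≥ s}`. -/
noncomputable def modInv (δ : ℝ → ℝ) (s : ℝ) : ℝ :=
  sInf {t : ℝ | t ∈ Set.Icc (0:ℝ) 2 ∧ s ≤ δ t}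

/-! ### Auxiliary lemmas -/

set_option linter.unusedSectionVars false

namespace SphEqAux

variable {p : ℝ}

lemma rpow_cancel (hp : 1 ≤ p) {x : ℝ} (hx : 0 ≤ x) : (x ^ p) ^ (1/p) = x := by
  have hp0 : p ≠ 0 := by positivity
  rw [← Real.rpow_mul hx, mul_one_div_cancel hp0, Real.rpow_one]

lemma le_of_rpow_le (hp : 1 ≤ p) {x y : ℝ} (hx : 0 ≤ x) (hy : 0 ≤ y)
    (h : x ^ p ≤ y ^ p) : x ≤ y := by
  have := Real.rpow_le_rpow (Real.rpow_nonneg hx p) h (by positivity : (0:ℝ) ≤ 1/p)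
  rwa [rpow_cancel hp hx, rpow_cancel hp hy] at this

section pnorm

variable {V W : Type*} [Fintype V] [NormedAddCommGroup W] [NormedSpace ℝ W]

/-- finite `p`-norm of a family of vectors -/
noncomputable def pnorm (p : ℝ) (f : V → W) : ℝ := (∑ v, ‖f v‖ ^ p) ^ (1/p)

lemma psum_nonneg (f : V → W) : 0 ≤ ∑ v, ‖f v‖ ^ p :=
  Finset.sum_nonneg fun _ _ => Real.rpow_nonneg (norm_nonneg _) _

lemma pnorm_nonneg (f : V → W) : 0 ≤ pnorm p f := Real.rpow_nonneg (psum_nonneg f) _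

lemma pnorm_rpow (hp : 1 ≤ p) (f : V → W) : (pnorm p f) ^ p = ∑ v, ‖f v‖ ^ p := by
  have hp0 : p ≠ 0 := by positivity
  rw [pnorm, ← Real.rpow_mul (psum_nonneg f), one_div_mul_cancel hp0, Real.rpow_one]

lemma pnorm_congr {W' : Type*} [NormedAddCommGroup W'] (f : V → W) (g : V → W')
    (h : ∀ v, ‖f v‖ = ‖g v‖) : pnorm p f = pnorm p g := by
  unfold pnorm; congr 1; exact Finset.sum_congr rfl fun v _ => by rw [h v]

lemma pnorm_zero (hp : 1 ≤ p) : pnorm p (fun _ : V => (0:W)) = 0 := by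
  have hp0 : p ≠ 0 := by positivity
  simp [pnorm, Real.zero_rpow hp0, Real.zero_rpow (inv_ne_zero hp0)]

lemma pnorm_smul (hp : 1 ≤ p) {c : ℝ} (hc : 0 ≤ c) (f : V → W) :
    pnorm p (fun v => c • f v) = c * pnorm p f := by
  unfold pnorm
  have h1 : ∀ v : V, ‖c • f v‖ ^ p = c ^ p * ‖f v‖ ^ p := fun v => by
    rw [norm_smul, Real.norm_eq_abs, abs_of_nonneg hc, Real.mul_rpow hc (norm_nonneg _)]
  simp_rw [h1, ← Finset.mul_sum]
  rw [Real.mul_rpow (Real.rpow_nonneg hc p) (psum_nonneg f), rpow_cancel hp hc]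

lemma pnorm_add_le (hp : 1 ≤ p) (f g : V → W) :
    pnorm p (fun v => f v + g v) ≤ pnorm p f + pnorm p g := by
  have hp0 : (0:ℝ) ≤ p := by positivity
  have h1 : pnorm p (fun v => f v + g v) ≤ (∑ v, (‖f v‖ + ‖g v‖) ^ p) ^ (1/p) := by
    apply Real.rpow_le_rpow (psum_nonneg _) _ (by positivity)
    exact Finset.sum_le_sum fun v _ => Real.rpow_le_rpow (norm_nonneg _) (norm_add_le _ _) hp0
  refine h1.trans ?_
  exact Real.Lp_add_le_of_nonneg Finset.univ hp (fun v _ => norm_nonneg _)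
    (fun v _ => norm_nonneg _)

lemma pnorm_sub_le (hp : 1 ≤ p) (f g : V → W) :
    pnorm p (fun v => f v - g v) ≤ pnorm p f + pnorm p g := by
  have h0 : pnorm p (fun v => f v - g v) = pnorm p (fun v => f v + (-g v)) := by
    apply pnorm_congr; intro v; rw [sub_eq_add_neg]
  rw [h0]
  refine (pnorm_add_le hp f (fun v => -g v)).trans ?_
  have h1 : pnorm p (fun v => -g v) = pnorm p g := pnorm_congr _ _ fun v => norm_neg _
  rw [h1]

lemma pnorm_pos (hp : 1 ≤ p) {f : V → W} (hf : f ≠ 0) : 0 < pnorm p f := by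
  obtain ⟨v₀, hv₀⟩ := Function.ne_iff.mp hf
  have h1 : (0:ℝ) < ‖f v₀‖ ^ p :=
    Real.rpow_pos_of_pos (norm_pos_iff.mpr hv₀) _
  have h2 : (0:ℝ) < ∑ v, ‖f v‖ ^ p :=
    lt_of_lt_of_le h1 (Finset.single_le_sum
      (fun v _ => Real.rpow_nonneg (norm_nonneg _) _) (Finset.mem_univ v₀))
  exact Real.rpow_pos_of_pos h2 _

lemma pnorm_comp_equiv (σ : V ≃ V) (f : V → W) :
    pnorm p (fun v => f (σ v)) = pnorm p f := by
  unfold pnorm; congr 1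
  exact Equiv.sum_comp σ (fun v => ‖f v‖ ^ p)

lemma pnorm_const (hp : 1 ≤ p) (u : W) :
    pnorm p (fun _ : V => u) = (Fintype.card V : ℝ) ^ (1/p) * ‖u‖ := by
  unfold pnorm
  rw [Finset.sum_const, Finset.card_univ, nsmul_eq_mul,
    Real.mul_rpow (by positivity) (Real.rpow_nonneg (norm_nonneg _) _),
    rpow_cancel hp (norm_nonneg _)]

lemma pnorm_mean_le (hp : 1 ≤ p) (g : V → W) :
    pnorm p (fun _ : V => (Fintype.card V : ℝ)⁻¹ • ∑ w, g w) ≤ pnorm p g := by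
  rcases isEmpty_or_nonempty V with hV | hV
  · simp [pnorm, Finset.univ_eq_empty, Real.zero_rpow (inv_ne_zero (by positivity : p ≠ 0))]
  have hn : (0:ℝ) < (Fintype.card V : ℝ) := by
    have := Fintype.card_pos (α := V); positivity
  set n : ℝ := (Fintype.card V : ℝ) with hndef
  apply le_of_rpow_le hp (pnorm_nonneg _) (pnorm_nonneg _)
  rw [pnorm_rpow hp, pnorm_rpow hp]
  rw [Finset.sum_const, Finset.card_univ, nsmul_eq_mul]
  have h1 : ‖(n⁻¹ • ∑ w, g w : W)‖ ≤ n⁻¹ * ∑ w, ‖g w‖ := by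
    rw [norm_smul, Real.norm_eq_abs, abs_of_nonneg (by positivity)]
    exact mul_le_mul_of_nonneg_left (norm_sum_le _ _) (by positivity)
  have h2 : ‖(n⁻¹ • ∑ w, g w : W)‖ ^ p ≤ (n⁻¹ * ∑ w, ‖g w‖) ^ p :=
    Real.rpow_le_rpow (norm_nonneg _) h1 (by positivity)
  have h3 : (∑ w, ‖g w‖) ^ p ≤ n ^ (p - 1) * ∑ w, ‖g w‖ ^ p := by
    have := Real.rpow_sum_le_const_mul_sum_rpow_of_nonneg (Finset.univ : Finset V)
      (f := fun w => ‖g w‖) hp (fun w _ => norm_nonneg _)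
    simpa [Finset.card_univ] using this
  calc n * ‖(n⁻¹ • ∑ w, g w : W)‖ ^ p ≤ n * ((n⁻¹ * ∑ w, ‖g w‖) ^ p) := by
        exact mul_le_mul_of_nonneg_left h2 (le_of_lt hn)
    _ = n * ((n⁻¹) ^ p * (∑ w, ‖g w‖) ^ p) := by
        rw [Real.mul_rpow (by positivity) (Finset.sum_nonneg fun w _ => norm_nonneg _)]
    _ ≤ n * ((n⁻¹) ^ p * (n ^ (p - 1) * ∑ w, ‖g w‖ ^ p)) := by
        have hinv : (0:ℝ) ≤ (n⁻¹) ^ p := Real.rpow_nonneg (by positivity) _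
        exact mul_le_mul_of_nonneg_left (mul_le_mul_of_nonneg_left h3 hinv) (le_of_lt hn)
    _ = (n * ((n⁻¹) ^ p * n ^ (p - 1))) * ∑ w, ‖g w‖ ^ p := by ring
    _ = ∑ w, ‖g w‖ ^ p := by
        have key : n * (n⁻¹ ^ p * n ^ (p - 1)) = 1 := by
          rw [Real.inv_rpow hn.le, ← Real.rpow_neg hn.le, ← Real.rpow_add hn]
          have : (-p + (p - 1)) = -1 := by ring
          rw [this, Real.rpow_neg_one, mul_inv_cancel₀ (ne_of_gt hn)]
        rw [key, one_mul]

lemma pnorm_zero_sum (hp : 1 ≤ p) {f : V → W} (hsum : ∑ v, f v = 0) (u : W) :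
    pnorm p f ≤ 2 * pnorm p (fun v => f v - u) := by
  rcases isEmpty_or_nonempty V with hV | hV
  · simp [pnorm, Finset.univ_eq_empty, Real.zero_rpow (inv_ne_zero (by positivity : p ≠ 0))]
  have hn : (0:ℝ) < (Fintype.card V : ℝ) := by
    have := Fintype.card_pos (α := V); positivity
  set g : V → W := fun v => f v - u with hg
  have hmean : (Fintype.card V : ℝ)⁻¹ • ∑ w, g w = -u := by
    have : ∑ w, g w = -((Fintype.card V : ℝ) • u) := by
      simp [hg, Finset.sum_sub_distrib, hsum, Finset.sum_const, Finset.card_univ,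
        ← Nat.cast_smul_eq_nsmul ℝ]
    rw [this, smul_neg, smul_smul, inv_mul_cancel₀ (ne_of_gt hn), one_smul]
  have hfeq : ∀ v, f v = g v - (Fintype.card V : ℝ)⁻¹ • ∑ w, g w := by
    intro v; rw [hmean]; simp [hg]
  calc pnorm p f = pnorm p (fun v => g v - (Fintype.card V : ℝ)⁻¹ • ∑ w, g w) := by
        apply pnorm_congr; intro v; rw [hfeq v]
    _ ≤ pnorm p g + pnorm p (fun _ : V => (Fintype.card V : ℝ)⁻¹ • ∑ w, g w) :=
        pnorm_sub_le hp _ _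
    _ ≤ pnorm p g + pnorm p g := by
        have := pnorm_mean_le hp g; linarith
    _ = 2 * pnorm p g := by ring

end pnorm

section canext

variable {X Y : Type*} [NormedAddCommGroup X] [NormedSpace ℝ X]
    [NormedAddCommGroup Y] [NormedSpace ℝ Y]

lemma canExt_zero (φ : Metric.sphere (0:X) 1 → Metric.sphere (0:Y) 1) :
    canExt φ 0 = 0 := dif_pos rfl

lemma norm_canExt (φ : Metric.sphere (0:X) 1 → Metric.sphere (0:Y) 1) (x : X) :
    ‖canExt φ x‖ = ‖x‖ := by
  by_cases hx : x = 0
  · simp [hx, canExt_zero]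
  · rw [canExt, dif_neg hx, norm_smul, Real.norm_eq_abs, abs_of_nonneg (norm_nonneg x),
      norm_eq_of_mem_sphere, mul_one]

lemma canExt_coe (φ : Metric.sphere (0:X) 1 → Metric.sphere (0:Y) 1)
    (z : Metric.sphere (0:X) 1) : canExt φ (z : X) = (φ z : Y) := by
  have hz : ‖(z : X)‖ = 1 := norm_eq_of_mem_sphere z
  have hz0 : (z : X) ≠ 0 := by intro h; rw [h, norm_zero] at hz; norm_num at hz
  rw [canExt, dif_neg hz0]
  have : (⟨‖(z:X)‖⁻¹ • (z:X), by
      rw [mem_sphere_zero_iff_norm, norm_smul, norm_inv, norm_norm,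
        inv_mul_cancel₀ (norm_ne_zero_iff.mpr hz0)]⟩ : Metric.sphere (0:X) 1) = z := by
    apply Subtype.ext; simp [hz]
  rw [this, hz, one_smul]

lemma canExt_smul (φ : Metric.sphere (0:X) 1 → Metric.sphere (0:Y) 1)
    {c : ℝ} (hc : 0 ≤ c) (x : X) : canExt φ (c • x) = c • canExt φ x := by
  by_cases hx : x = 0
  · simp [hx, canExt_zero]
  by_cases hc0 : c = 0
  · simp [hc0, canExt_zero]
  have hcpos : 0 < c := lt_of_le_of_ne hc (Ne.symm hc0)
  have hcx : c • x ≠ 0 := smul_ne_zero hc0 hx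
  rw [canExt, dif_neg hcx, canExt, dif_neg hx]
  have hnorm : ‖c • x‖ = c * ‖x‖ := by
    rw [norm_smul, Real.norm_eq_abs, abs_of_nonneg hc]
  have harg : (‖c • x‖⁻¹ • (c • x) : X) = ‖x‖⁻¹ • x := by
    rw [hnorm, smul_smul, mul_inv]
    congr 1
    rw [mul_comm, ← mul_assoc, mul_inv_cancel₀ hc0, one_mul]
  have : (⟨‖c • x‖⁻¹ • (c • x), by
      rw [mem_sphere_zero_iff_norm, norm_smul, norm_inv, norm_norm,
        inv_mul_cancel₀ (norm_ne_zero_iff.mpr hcx)]⟩ : Metric.sphere (0:X) 1) =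
      ⟨‖x‖⁻¹ • x, by
      rw [mem_sphere_zero_iff_norm, norm_smul, norm_inv, norm_norm,
        inv_mul_cancel₀ (norm_ne_zero_iff.mpr hx)]⟩ := Subtype.ext harg
  rw [this, hnorm, smul_smul]

lemma canExt_symm_canExt (φ : Metric.sphere (0:X) 1 ≃ Metric.sphere (0:Y) 1) (x : X) :
    canExt (⇑φ.symm) (canExt (⇑φ) x) = x := by
  by_cases hx : x = 0
  · simp [hx, canExt_zero]
  have hnx : (0:ℝ) < ‖x‖ := norm_pos_iff.mpr hx
  set z : Metric.sphere (0:X) 1 := ⟨‖x‖⁻¹ • x, by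
      rw [mem_sphere_zero_iff_norm, norm_smul, norm_inv, norm_norm,
        inv_mul_cancel₀ (norm_ne_zero_iff.mpr hx)]⟩ with hz
  have h1 : canExt (⇑φ) x = ‖x‖ • (φ z : Y) := by rw [canExt, dif_neg hx]
  rw [h1, canExt_smul _ hnx.le, canExt_coe, Equiv.symm_apply_apply]
  show ‖x‖ • (‖x‖⁻¹ • x) = x
  rw [smul_smul, mul_inv_cancel₀ (ne_of_gt hnx), one_smul]

end canext

section interleave

variable {V : Type*} [Fintype V] {W : Type*} [NormedAddCommGroup W] [NormedSpace ℝ W]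
  [Fact (1 ≤ ENNReal.ofReal p)]

lemma memℓp_interleave (hp : 1 ≤ p) (e : V × ℕ ≃ ℕ)
    (f : V → lp (fun _ : ℕ => W) (ENNReal.ofReal p)) :
    Memℓp (fun i => f (e.symm i).1 ((e.symm i).2)) (ENNReal.ofReal p) := by
  have hq : 0 < (ENNReal.ofReal p).toReal := by
    rw [ENNReal.toReal_ofReal (by linarith : (0:ℝ) ≤ p)]; linarith
  apply memℓp_gen
  set q := (ENNReal.ofReal p).toReal with hqdef
  set g : V × ℕ → ℝ := fun vk => ‖f vk.1 vk.2‖ ^ q with hg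
  have hgsum : Summable g := by
    rw [summable_prod_of_nonneg (fun vk => Real.rpow_nonneg (norm_nonneg _) _)]
    exact ⟨fun v => (lp.memℓp (f v)).summable hq, Summable.of_finite⟩
  exact (Equiv.summable_iff e.symm).mpr hgsum

noncomputable def interleave (hp : 1 ≤ p) (e : V × ℕ ≃ ℕ)
    (f : V → lp (fun _ : ℕ => W) (ENNReal.ofReal p)) :
    lp (fun _ : ℕ => W) (ENNReal.ofReal p) :=
  ⟨fun i => f (e.symm i).1 ((e.symm i).2), memℓp_interleave hp e f⟩

lemma interleave_apply (hp : 1 ≤ p) (e : V × ℕ ≃ ℕ)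
    (f : V → lp (fun _ : ℕ => W) (ENNReal.ofReal p)) (i : ℕ) :
    (interleave hp e f : ∀ _ : ℕ, W) i = f (e.symm i).1 ((e.symm i).2) := rfl

lemma norm_interleave (hp : 1 ≤ p) (e : V × ℕ ≃ ℕ)
    (f : V → lp (fun _ : ℕ => W) (ENNReal.ofReal p)) :
    ‖interleave hp e f‖ = pnorm p f := by
  have hq : 0 < (ENNReal.ofReal p).toReal := by
    rw [ENNReal.toReal_ofReal (by linarith : (0:ℝ) ≤ p)]; linarith
  have hqp : (ENNReal.ofReal p).toReal = p := ENNReal.toReal_ofReal (by linarith)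
  set q := (ENNReal.ofReal p).toReal with hqdef
  set g : V × ℕ → ℝ := fun vk => ‖f vk.1 vk.2‖ ^ q with hg
  have hgsum : Summable g := by
    rw [summable_prod_of_nonneg (fun vk => Real.rpow_nonneg (norm_nonneg _) _)]
    exact ⟨fun v => (lp.memℓp (f v)).summable hq, Summable.of_finite⟩
  rw [lp.norm_eq_tsum_rpow hq]
  have h1 : ∑' i, ‖(interleave hp e f : ∀ _ : ℕ, W) i‖ ^ q = ∑' vk : V × ℕ, g vk :=
    Equiv.tsum_eq e.symm g
  rw [h1, Summable.tsum_prod' hgsum (fun v => (lp.memℓp (f v)).summable hq), tsum_fintype]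
  have h2 : ∀ v, ∑' k, g (v, k) = ‖f v‖ ^ q := fun v =>
    (lp.norm_rpow_eq_tsum hq (f v)).symm
  simp_rw [h2]
  rw [pnorm, hqp]
  norm_num [hqp]
  rw [ENNReal.toReal_ofReal (by linarith : (0:ℝ) ≤ p)]

lemma interleave_sub (hp : 1 ≤ p) (e : V × ℕ ≃ ℕ)
    (f g : V → lp (fun _ : ℕ => W) (ENNReal.ofReal p)) :
    interleave hp e f - interleave hp e g = interleave hp e (fun v => f v - g v) := by
  apply lp.ext
  rw [lp.coeFn_sub]
  funext i
  show (interleave hp e f : ∀ _ : ℕ, W) i - (interleave hp e g : ∀ _ : ℕ, W) i = _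
  rw [interleave_apply, interleave_apply, interleave_apply]
  have := lp.coeFn_sub (f (e.symm i).1) (g (e.symm i).1)
  rw [this]
  rfl

lemma interleave_smul (hp : 1 ≤ p) (e : V × ℕ ≃ ℕ) (c : ℝ)
    (f : V → lp (fun _ : ℕ => W) (ENNReal.ofReal p)) :
    c • interleave hp e f = interleave hp e (fun v => c • f v) := by
  apply lp.ext
  rw [lp.coeFn_smul]
  funext i
  show c • (interleave hp e f : ∀ _ : ℕ, W) i = _
  rw [interleave_apply, interleave_apply]
  have := lp.coeFn_smul c (f (e.symm i).1)
  rw [this]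
  rfl

end interleave

section coord

variable {X Y : Type*} [NormedAddCommGroup X] [NormedSpace ℝ X] [CompleteSpace X]
    [NormedAddCommGroup Y] [NormedSpace ℝ Y] [CompleteSpace Y]
    [Fact (1 ≤ ENNReal.ofReal p)]

/-- Coordinates of the canonical extension of a coordinatewise sphere map. -/
lemma canExt_coord (hp : 1 ≤ p)
    (ψ : Metric.sphere (0:X) 1 → Metric.sphere (0:Y) 1)
    (Ψ : Metric.sphere (0 : lp (fun _ : ℕ => X) (ENNReal.ofReal p)) 1 →
         Metric.sphere (0 : lp (fun _ : ℕ => Y) (ENNReal.ofReal p)) 1)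
    (hΨ : ∀ (x : Metric.sphere (0 : lp (fun _ : ℕ => X) (ENNReal.ofReal p)) 1) (i : ℕ),
      (↑(Ψ x) : lp (fun _ : ℕ => Y) (ENNReal.ofReal p)) i =
        canExt ψ ((↑x : lp (fun _ : ℕ => X) (ENNReal.ofReal p)) i))
    (x : lp (fun _ : ℕ => X) (ENNReal.ofReal p)) (k : ℕ) :
    (canExt Ψ x : lp (fun _ : ℕ => Y) (ENNReal.ofReal p)) k = canExt ψ (x k) := by
  by_cases hx : x = 0
  · subst hx
    rw [canExt_zero]
    have h1 : ((0 : lp (fun _ : ℕ => Y) (ENNReal.ofReal p)) : ∀ _ : ℕ, Y) k = 0 := by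
      rw [lp.coeFn_zero]; rfl
    have h2 : ((0 : lp (fun _ : ℕ => X) (ENNReal.ofReal p)) : ∀ _ : ℕ, X) k = 0 := by
      rw [lp.coeFn_zero]; rfl
    rw [h1, h2, canExt_zero]
  · have hnx : (0:ℝ) < ‖x‖ := norm_pos_iff.mpr hx
    set z : Metric.sphere (0 : lp (fun _ : ℕ => X) (ENNReal.ofReal p)) 1 := ⟨‖x‖⁻¹ • x, by
        rw [mem_sphere_zero_iff_norm, norm_smul, norm_inv, norm_norm,
          inv_mul_cancel₀ (norm_ne_zero_iff.mpr hx)]⟩ with hzdef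
    have h1 : canExt Ψ x = ‖x‖ • ((Ψ z : lp (fun _ : ℕ => Y) (ENNReal.ofReal p))) := by
      rw [canExt, dif_neg hx]
    rw [h1]
    have h2 := lp.coeFn_smul ‖x‖ ((Ψ z : lp (fun _ : ℕ => Y) (ENNReal.ofReal p)))
    rw [h2, Pi.smul_apply, hΨ z k]
    have h3 : ((z : lp (fun _ : ℕ => X) (ENNReal.ofReal p)) : ∀ _ : ℕ, X) k
        = ‖x‖⁻¹ • (x k) := by
      show ((‖x‖⁻¹ • x : lp (fun _ : ℕ => X) (ENNReal.ofReal p)) : ∀ _ : ℕ, X) k = _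
      rw [lp.coeFn_smul]; rfl
    rw [h3, ← canExt_smul ψ hnx.le, smul_smul, mul_inv_cancel₀ (ne_of_gt hnx), one_smul]

variable {V : Type*} [Fintype V]

lemma Psi_interleave (hp : 1 ≤ p) (e : V × ℕ ≃ ℕ)
    (ψ : Metric.sphere (0:X) 1 → Metric.sphere (0:Y) 1)
    (Ψ : Metric.sphere (0 : lp (fun _ : ℕ => X) (ENNReal.ofReal p)) 1 →
         Metric.sphere (0 : lp (fun _ : ℕ => Y) (ENNReal.ofReal p)) 1)
    (hΨ : ∀ (x : Metric.sphere (0 : lp (fun _ : ℕ => X) (ENNReal.ofReal p)) 1) (i : ℕ),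
      (↑(Ψ x) : lp (fun _ : ℕ => Y) (ENNReal.ofReal p)) i =
        canExt ψ ((↑x : lp (fun _ : ℕ => X) (ENNReal.ofReal p)) i))
    (f : V → lp (fun _ : ℕ => X) (ENNReal.ofReal p))
    (A : Metric.sphere (0 : lp (fun _ : ℕ => X) (ENNReal.ofReal p)) 1)
    (hA : (A : lp (fun _ : ℕ => X) (ENNReal.ofReal p)) = interleave hp e f) :
    (↑(Ψ A) : lp (fun _ : ℕ => Y) (ENNReal.ofReal p)) =
      interleave hp e (fun v => canExt Ψ (f v)) := by
  apply lp.ext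
  funext i
  rw [hΨ A i, hA, interleave_apply, interleave_apply]
  exact (canExt_coord hp ψ Ψ hΨ (f (e.symm i).1) ((e.symm i).2)).symm

end coord

end SphEqAux

namespace SphEqAux

lemma dispConst_set_nonneg (Γ : Type*) [Group Γ] (H : Subgroup Γ) [Fintype (Γ ⧸ H)]
    (S : Finset Γ) (Z : Type*) [NormedAddCommGroup Z] [NormedSpace ℝ Z] (p : ℝ)
    [Fact (1 ≤ ENNReal.ofReal p)] :
    ∀ r ∈ {r : ℝ | ∃ ξ : Γ ⧸ H → lp (fun _ : ℕ => Z) (ENNReal.ofReal p),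
      ξ ≠ 0 ∧ (∑ v : Γ ⧸ H, ξ v) = 0 ∧
      r = sSup {t : ℝ | ∃ s ∈ S,
        t = (∑ v : Γ ⧸ H, ‖ξ (s⁻¹ • v) - ξ v‖ ^ p) ^ (1/p) /
            (∑ v : Γ ⧸ H, ‖ξ v‖ ^ p) ^ (1/p)}}, 0 ≤ r := by
  rintro r ⟨ξ, -, -, rfl⟩
  apply Real.sSup_nonneg
  rintro t ⟨s, -, rfl⟩
  apply div_nonneg
  · exact Real.rpow_nonneg (Finset.sum_nonneg fun v _ =>
      Real.rpow_nonneg (norm_nonneg _) _) _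
  · exact Real.rpow_nonneg (Finset.sum_nonneg fun v _ =>
      Real.rpow_nonneg (norm_nonneg _) _) _

lemma dispConst_nonneg (Γ : Type*) [Group Γ] (H : Subgroup Γ) [Fintype (Γ ⧸ H)]
    (S : Finset Γ) (Z : Type*) [NormedAddCommGroup Z] [NormedSpace ℝ Z] (p : ℝ)
    [Fact (1 ≤ ENNReal.ofReal p)] : 0 ≤ dispConst Γ H S Z p :=
  Real.sInf_nonneg (dispConst_set_nonneg Γ H S Z p)

end SphEqAux

set_option maxHeartbeats 2000000 in
open SphEqAux in
theorem dispConst_sphere_equivalence_estimate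
    (X Y : Type*) [NormedAddCommGroup X] [NormedSpace ℝ X] [CompleteSpace X]
    [NormedAddCommGroup Y] [NormedSpace ℝ Y] [CompleteSpace Y]
    (φ : Metric.sphere (0:X) 1 ≃ Metric.sphere (0:Y) 1)
    (hφ : UniformContinuous φ) (hφsymm : UniformContinuous φ.symm)
    (Γ : Type*) [Group Γ] (S : Finset Γ) (hsym : ∀ s ∈ S, s⁻¹ ∈ S) (hid : (1:Γ) ∉ S)
    (H : Subgroup Γ) [Fintype (Γ ⧸ H)]
    (p : ℝ) (hp : 1 ≤ p) [Fact (1 ≤ ENNReal.ofReal p)]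
    (Φ : Metric.sphere (0 : lp (fun _ : ℕ => X) (ENNReal.ofReal p)) 1 ≃
         Metric.sphere (0 : lp (fun _ : ℕ => Y) (ENNReal.ofReal p)) 1)
    (hΦ : ∀ (x : Metric.sphere (0 : lp (fun _ : ℕ => X) (ENNReal.ofReal p)) 1) (i : ℕ),
      (↑(Φ x) : lp (fun _ : ℕ => Y) (ENNReal.ofReal p)) i =
        canExt φ ((↑x : lp (fun _ : ℕ => X) (ENNReal.ofReal p)) i))
    (δ₁ δ₂ : ℝ → ℝ) (hδ₁ : IsUpperModulus Φ δ₁) (hδ₂ : IsUpperModulus Φ.symm δ₂) :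
    modInv δ₁ ((1/2) * modInv δ₂ (1/2) * dispConst Γ H S Y p) ≤ dispConst Γ H S X p := by
  classical
  have hp0 : (0:ℝ) < p := by linarith
  set κY := dispConst Γ H S Y p with hκYdef
  set m₂ := modInv δ₂ (1/2) with hm₂def
  have hκnn : 0 ≤ κY := dispConst_nonneg Γ H S Y p
  have hm₂nn : 0 ≤ m₂ := Real.sInf_nonneg fun t ht => ht.1.1
  have hXnn : 0 ≤ dispConst Γ H S X p := dispConst_nonneg Γ H S X p
  rcases le_or_gt ((1/2) * m₂ * κY) 0 with hc0 | hc0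
  · -- trivial case: the threshold is nonpositive
    have hset : {t : ℝ | t ∈ Set.Icc (0:ℝ) 2 ∧ (1/2) * m₂ * κY ≤ δ₁ t}
        = Set.Icc (0:ℝ) 2 := by
      ext t
      exact ⟨fun h => h.1, fun h => ⟨h, le_trans hc0 (hδ₁.2.1 t h.1 h.2)⟩⟩
    rw [modInv, hset, csInf_Icc (by norm_num : (0:ℝ) ≤ 2)]
    exact hXnn
  -- main case
  have hm₂pos : 0 < m₂ := by
    rcases lt_or_eq_of_le hm₂nn with h | h
    · exact h
    · exfalso; rw [← h] at hc0; nlinarith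
  have hκpos : 0 < κY := by nlinarith
  -- properties of m₂
  have hm₂set : {t : ℝ | t ∈ Set.Icc (0:ℝ) 2 ∧ (1/2:ℝ) ≤ δ₂ t}.Nonempty := by
    by_contra h
    rw [Set.not_nonempty_iff_eq_empty] at h
    have : m₂ = 0 := by rw [hm₂def, modInv, h, Real.sInf_empty]
    linarith
  obtain ⟨t₀, ht₀⟩ := hm₂set
  have hm₂le2 : m₂ ≤ 2 := le_trans (csInf_le ⟨0, fun x hx => hx.1.1⟩ ht₀) ht₀.1.2
  have hδ₂small : ∀ t, 0 ≤ t → t < m₂ → δ₂ t < 1/2 := by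
    intro t h0 hlt
    by_contra hge
    push_neg at hge
    have : m₂ ≤ t := csInf_le ⟨0, fun x hx => hx.1.1⟩ ⟨⟨h0, le_trans hlt.le hm₂le2⟩, hge⟩
    linarith
  -- the card and the equivalence
  have hcard : (0:ℝ) < (Fintype.card (Γ ⧸ H) : ℝ) := by
    have := Fintype.card_pos (α := Γ ⧸ H); positivity
  haveI : NeZero (Fintype.card (Γ ⧸ H)) := ⟨Fintype.card_pos.ne'⟩
  set e : (Γ ⧸ H) × ℕ ≃ ℕ :=
    ((Fintype.equivFin (Γ ⧸ H)).prodCongr (Equiv.refl ℕ)).trans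
      ((Equiv.prodComm _ _).trans (Nat.divModEquiv (Fintype.card (Γ ⧸ H))).symm) with hedef
  -- the defining sets
  have hXrfl : dispConst Γ H S X p =
      sInf {r : ℝ | ∃ ξ : Γ ⧸ H → lp (fun _ : ℕ => X) (ENNReal.ofReal p),
        ξ ≠ 0 ∧ (∑ v : Γ ⧸ H, ξ v) = 0 ∧
        r = sSup {t : ℝ | ∃ s ∈ S,
          t = (∑ v : Γ ⧸ H, ‖ξ (s⁻¹ • v) - ξ v‖ ^ p) ^ (1/p) /
              (∑ v : Γ ⧸ H, ‖ξ v‖ ^ p) ^ (1/p)}} := rfl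
  have hYrfl : dispConst Γ H S Y p =
      sInf {r : ℝ | ∃ ξ : Γ ⧸ H → lp (fun _ : ℕ => Y) (ENNReal.ofReal p),
        ξ ≠ 0 ∧ (∑ v : Γ ⧸ H, ξ v) = 0 ∧
        r = sSup {t : ℝ | ∃ s ∈ S,
          t = (∑ v : Γ ⧸ H, ‖ξ (s⁻¹ • v) - ξ v‖ ^ p) ^ (1/p) /
              (∑ v : Γ ⧸ H, ‖ξ v‖ ^ p) ^ (1/p)}} := rfl
  -- SY is nonempty (else κY = 0)
  have hSYne : {r : ℝ | ∃ ξ : Γ ⧸ H → lp (fun _ : ℕ => Y) (ENNReal.ofReal p),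
        ξ ≠ 0 ∧ (∑ v : Γ ⧸ H, ξ v) = 0 ∧
        r = sSup {t : ℝ | ∃ s ∈ S,
          t = (∑ v : Γ ⧸ H, ‖ξ (s⁻¹ • v) - ξ v‖ ^ p) ^ (1/p) /
              (∑ v : Γ ⧸ H, ‖ξ v‖ ^ p) ^ (1/p)}}.Nonempty := by
    by_contra h
    rw [Set.not_nonempty_iff_eq_empty] at h
    have : κY = 0 := by rw [hκYdef, hYrfl, h, Real.sInf_empty]
    linarith
  -- hence SX is nonempty
  have hSXne : {r : ℝ | ∃ ξ : Γ ⧸ H → lp (fun _ : ℕ => X) (ENNReal.ofReal p),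
        ξ ≠ 0 ∧ (∑ v : Γ ⧸ H, ξ v) = 0 ∧
        r = sSup {t : ℝ | ∃ s ∈ S,
          t = (∑ v : Γ ⧸ H, ‖ξ (s⁻¹ • v) - ξ v‖ ^ p) ^ (1/p) /
              (∑ v : Γ ⧸ H, ‖ξ v‖ ^ p) ^ (1/p)}}.Nonempty := by
    obtain ⟨r₀, ξ₀, hξ₀ne, hξ₀sum, -⟩ := hSYne
    obtain ⟨v₀, hv₀⟩ := Function.ne_iff.mp hξ₀ne
    have hv₀' : ξ₀ v₀ ≠ 0 := hv₀
    have hnorm₀ : (0:ℝ) < ‖ξ₀ v₀‖ := norm_pos_iff.mpr hv₀'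
    set y₀ : Metric.sphere (0 : lp (fun _ : ℕ => Y) (ENNReal.ofReal p)) 1 :=
      ⟨‖ξ₀ v₀‖⁻¹ • ξ₀ v₀, by
        rw [mem_sphere_zero_iff_norm, norm_smul, norm_inv, norm_norm,
          inv_mul_cancel₀ (ne_of_gt hnorm₀)]⟩ with hy₀
    set u₀ := (↑(Φ.symm y₀) : lp (fun _ : ℕ => X) (ENNReal.ofReal p)) with hu₀def
    have hu₀ : u₀ ≠ 0 := by
      have h1 : ‖u₀‖ = 1 := norm_eq_of_mem_sphere _
      intro h; rw [h, norm_zero] at h1; norm_num at h1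
    obtain ⟨w₀, hw₀⟩ : ∃ w : Γ ⧸ H, w ≠ v₀ := by
      by_contra h
      push_neg at h
      have h1 : ∑ v : Γ ⧸ H, ξ₀ v = ξ₀ v₀ :=
        Finset.sum_eq_single v₀ (fun b _ hb => absurd (h b) hb)
          (fun h' => absurd (Finset.mem_univ v₀) h')
      rw [hξ₀sum] at h1
      exact hv₀' h1.symm
    set ξ₁ : Γ ⧸ H → lp (fun _ : ℕ => X) (ENNReal.ofReal p) :=
      Pi.single v₀ u₀ + Pi.single w₀ (-u₀) with hξ₁
    refine ⟨_, ξ₁, ?_, ?_, rfl⟩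
    · intro h
      have h1 : ξ₁ v₀ = 0 := by rw [h]; rfl
      rw [hξ₁, Pi.add_apply, Pi.single_eq_same, Pi.single_eq_of_ne (Ne.symm hw₀),
        add_zero] at h1
      exact hu₀ h1
    · rw [hξ₁]
      simp only [Pi.add_apply]
      rw [Finset.sum_add_distrib, Finset.sum_pi_single', Finset.sum_pi_single']
      simp
  -- main estimate
  rw [hXrfl]
  apply le_csInf hSXne
  rintro r ⟨ξ, hξne, hξsum, hreq⟩
  -- normalization
  have hNξ : 0 < pnorm p ξ := pnorm_pos hp hξne
  set ξh : Γ ⧸ H → lp (fun _ : ℕ => X) (ENNReal.ofReal p) :=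
    fun v => (pnorm p ξ)⁻¹ • ξ v with hξh
  have hξhnorm : pnorm p ξh = 1 := by
    rw [hξh, pnorm_smul hp (inv_nonneg.mpr hNξ.le), inv_mul_cancel₀ (ne_of_gt hNξ)]
  have hξhsum : ∑ v : Γ ⧸ H, ξh v = 0 := by
    rw [hξh]; dsimp only; rw [← Finset.smul_sum, hξsum, smul_zero]
  set η : Γ ⧸ H → lp (fun _ : ℕ => Y) (ENNReal.ofReal p) :=
    fun v => canExt (⇑Φ) (ξh v) with hη
  have hηnorm : pnorm p η = 1 := by
    have h0 : pnorm p η = pnorm p ξh :=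
      pnorm_congr η ξh (fun v => norm_canExt (⇑Φ) (ξh v))
    rw [h0, hξhnorm]
  -- T is bounded above
  have himg : {t : ℝ | ∃ s ∈ S,
        t = (∑ v : Γ ⧸ H, ‖ξ (s⁻¹ • v) - ξ v‖ ^ p) ^ (1/p) /
            (∑ v : Γ ⧸ H, ‖ξ v‖ ^ p) ^ (1/p)} =
      (fun s : Γ => (∑ v : Γ ⧸ H, ‖ξ (s⁻¹ • v) - ξ v‖ ^ p) ^ (1/p) /
            (∑ v : Γ ⧸ H, ‖ξ v‖ ^ p) ^ (1/p)) '' ↑S := by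
    ext t
    constructor
    · rintro ⟨s, hs, rfl⟩; exact ⟨s, hs, rfl⟩
    · rintro ⟨s, hs, rfl⟩; exact ⟨s, hs, rfl⟩
  have hTbdd : BddAbove {t : ℝ | ∃ s ∈ S,
        t = (∑ v : Γ ⧸ H, ‖ξ (s⁻¹ • v) - ξ v‖ ^ p) ^ (1/p) /
            (∑ v : Γ ⧸ H, ‖ξ v‖ ^ p) ^ (1/p)} := by
    rw [himg]; exact (S.finite_toSet.image _).bddAbove
  -- each normalized displacement is at most r
  have hsle : ∀ s ∈ S, pnorm p (fun v => ξh (s⁻¹ • v) - ξh v) ≤ r := by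
    intro s hs
    have h1 : (fun v : Γ ⧸ H => ξh (s⁻¹ • v) - ξh v)
        = fun v => (pnorm p ξ)⁻¹ • (ξ (s⁻¹ • v) - ξ v) := by
      funext v; rw [hξh]; dsimp only; rw [smul_sub]
    rw [h1, pnorm_smul hp (inv_nonneg.mpr hNξ.le)]
    have h2 : (pnorm p ξ)⁻¹ * pnorm p (fun v => ξ (s⁻¹ • v) - ξ v)
        = (∑ v : Γ ⧸ H, ‖ξ (s⁻¹ • v) - ξ v‖ ^ p) ^ (1/p) /
          (∑ v : Γ ⧸ H, ‖ξ v‖ ^ p) ^ (1/p) := by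
      rw [inv_mul_eq_div]; rfl
    calc (pnorm p ξ)⁻¹ * pnorm p (fun v => ξ (s⁻¹ • v) - ξ v)
        = (∑ v : Γ ⧸ H, ‖ξ (s⁻¹ • v) - ξ v‖ ^ p) ^ (1/p) /
          (∑ v : Γ ⧸ H, ‖ξ v‖ ^ p) ^ (1/p) := h2
      _ ≤ sSup {t : ℝ | ∃ s ∈ S,
          t = (∑ v : Γ ⧸ H, ‖ξ (s⁻¹ • v) - ξ v‖ ^ p) ^ (1/p) /
              (∑ v : Γ ⧸ H, ‖ξ v‖ ^ p) ^ (1/p)} := le_csSup hTbdd ⟨s, hs, rfl⟩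
      _ = r := hreq.symm
  have hr0 : 0 ≤ r := by
    rw [hreq]
    apply Real.sSup_nonneg
    rintro t ⟨s, -, rfl⟩
    apply div_nonneg <;>
      exact Real.rpow_nonneg (Finset.sum_nonneg fun v _ =>
        Real.rpow_nonneg (norm_nonneg _) _) _
  have hr2 : r ≤ 2 := by
    rw [hreq]
    apply Real.sSup_le _ (by norm_num)
    rintro t ⟨s, hs, rfl⟩
    have h1 : pnorm p (fun v => ξ (s⁻¹ • v) - ξ v) ≤ 2 * pnorm p ξ := by
      refine (pnorm_sub_le hp _ _).trans ?_
      have h2 : pnorm p (fun v : Γ ⧸ H => ξ (s⁻¹ • v)) = pnorm p ξ :=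
        pnorm_comp_equiv (MulAction.toPerm (s⁻¹ : Γ)) ξ
      rw [h2]; linarith
    show pnorm p (fun v => ξ (s⁻¹ • v) - ξ v) / pnorm p ξ ≤ 2
    rw [div_le_iff₀ hNξ]
    linarith
  -- the sphere point A = interleave of ξh and its Φ-image
  set A : Metric.sphere (0 : lp (fun _ : ℕ => X) (ENNReal.ofReal p)) 1 :=
    ⟨interleave hp e ξh, by
      rw [mem_sphere_zero_iff_norm, norm_interleave hp e ξh, hξhnorm]⟩ with hA
  have hΦA : (↑(Φ A) : lp (fun _ : ℕ => Y) (ENNReal.ofReal p)) = interleave hp e η := by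
    rw [hη]
    exact Psi_interleave hp e (⇑φ) (⇑Φ) hΦ ξh A rfl
  -- key displacement estimate for η
  have hkey : ∀ s ∈ S, pnorm p (fun v => η (s⁻¹ • v) - η v) ≤ δ₁ r := by
    intro s hs
    have hshiftnorm : pnorm p (fun v : Γ ⧸ H => ξh (s⁻¹ • v)) = 1 := by
      rw [← hξhnorm]
      exact pnorm_comp_equiv (MulAction.toPerm (s⁻¹ : Γ)) ξh
    set As : Metric.sphere (0 : lp (fun _ : ℕ => X) (ENNReal.ofReal p)) 1 :=
      ⟨interleave hp e (fun v => ξh (s⁻¹ • v)), by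
        rw [mem_sphere_zero_iff_norm, norm_interleave hp e, hshiftnorm]⟩ with hAs
    have h1 := hδ₁.2.2.2 As A
    have h3 : (↑(Φ As) : lp (fun _ : ℕ => Y) (ENNReal.ofReal p)) =
        interleave hp e (fun v => canExt (⇑Φ) (ξh (s⁻¹ • v))) :=
      Psi_interleave hp e (⇑φ) (⇑Φ) hΦ (fun v => ξh (s⁻¹ • v)) As rfl
    have h4 : ‖(↑(Φ As) : lp (fun _ : ℕ => Y) (ENNReal.ofReal p)) - ↑(Φ A)‖
        = pnorm p (fun v => η (s⁻¹ • v) - η v) := by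
      rw [h3, hΦA, interleave_sub hp e, norm_interleave hp e]
    have h5 : ‖(↑As : lp (fun _ : ℕ => X) (ENNReal.ofReal p)) - ↑A‖
        = pnorm p (fun v => ξh (s⁻¹ • v) - ξh v) := by
      show ‖interleave hp e (fun v => ξh (s⁻¹ • v)) - interleave hp e ξh‖ = _
      rw [interleave_sub hp e, norm_interleave hp e]
    rw [h4, h5] at h1
    exact h1.trans (hδ₁.1 _ r (pnorm_nonneg _) (hsle s hs) hr2)
  -- the mean and the recentered family
  set mY : lp (fun _ : ℕ => Y) (ENNReal.ofReal p) :=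
    (Fintype.card (Γ ⧸ H) : ℝ)⁻¹ • ∑ w : Γ ⧸ H, η w with hmY
  set ζ : Γ ⧸ H → lp (fun _ : ℕ => Y) (ENNReal.ofReal p) := fun v => η v - mY with hζ
  have hζsum : ∑ v : Γ ⧸ H, ζ v = 0 := by
    rw [hζ]; dsimp only
    rw [Finset.sum_sub_distrib, Finset.sum_const, Finset.card_univ,
      ← Nat.cast_smul_eq_nsmul ℝ, hmY, smul_smul,
      mul_inv_cancel₀ (ne_of_gt hcard), one_smul, sub_self]
  -- the heart: the recentered family is large
  have hheart : (1/2) * m₂ ≤ pnorm p ζ := by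
    by_contra hlt
    push_neg at hlt
    have hd0 : 0 ≤ pnorm p ζ := pnorm_nonneg _
    have h2d : 2 * pnorm p ζ < m₂ := by linarith
    have hd1 : pnorm p ζ < 1 := by linarith
    set B := interleave hp e η with hB
    have hBnorm : ‖B‖ = 1 := by rw [hB, norm_interleave hp e, hηnorm]
    set C := interleave hp e (fun _ : Γ ⧸ H => mY) with hC
    have hBC : ‖B - C‖ = pnorm p ζ := by
      rw [hB, hC, interleave_sub hp e, norm_interleave hp e]
    have habs : |‖C‖ - 1| ≤ pnorm p ζ := by
      have h1 := abs_norm_sub_norm_le C B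
      rw [hBnorm, norm_sub_rev, hBC] at h1
      exact h1
    have hCpos : 0 < ‖C‖ := by
      have h1 : 1 - ‖C‖ ≤ |‖C‖ - 1| := by rw [abs_sub_comm]; exact le_abs_self _
      linarith
    set Chat := ‖C‖⁻¹ • C with hChat
    have hChatnorm : ‖Chat‖ = 1 := by
      rw [hChat, norm_smul, norm_inv, norm_norm, inv_mul_cancel₀ (ne_of_gt hCpos)]
    have hCChat : ‖C - Chat‖ = |‖C‖ - 1| := by
      have h1 : C - Chat = (1 - ‖C‖⁻¹) • C := by
        rw [hChat, sub_smul, one_smul]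
      rw [h1, norm_smul, Real.norm_eq_abs]
      rw [show |1 - ‖C‖⁻¹| * ‖C‖ = |(1 - ‖C‖⁻¹) * ‖C‖| by
        rw [abs_mul, abs_of_nonneg (norm_nonneg C)]]
      congr 1
      rw [sub_mul, one_mul, inv_mul_cancel₀ (ne_of_gt hCpos)]
    have hBChat : ‖B - Chat‖ ≤ 2 * pnorm p ζ := by
      calc ‖B - Chat‖ = ‖(B - C) + (C - Chat)‖ := by rw [sub_add_sub_cancel]
        _ ≤ ‖B - C‖ + ‖C - Chat‖ := norm_add_le _ _
        _ ≤ pnorm p ζ + pnorm p ζ := by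
            rw [hBC, hCChat]; exact add_le_add le_rfl habs
        _ = 2 * pnorm p ζ := by ring
    set Cs : Metric.sphere (0 : lp (fun _ : ℕ => Y) (ENNReal.ofReal p)) 1 :=
      ⟨Chat, mem_sphere_zero_iff_norm.mpr hChatnorm⟩ with hCs
    have hδ2app := hδ₂.2.2.2 (Φ A) Cs
    rw [Equiv.symm_apply_apply] at hδ2app
    have hargeq : ‖(↑(Φ A) : lp (fun _ : ℕ => Y) (ENNReal.ofReal p)) - ↑Cs‖ = ‖B - Chat‖ := by
      rw [hΦA, hB]
    have harg2 : δ₂ ‖(↑(Φ A) : lp (fun _ : ℕ => Y) (ENNReal.ofReal p)) - ↑Cs‖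
        ≤ δ₂ (2 * pnorm p ζ) := by
      apply hδ₂.1 _ _ (norm_nonneg _) _ (by linarith)
      rw [hargeq]; exact hBChat
    have hsmall : δ₂ (2 * pnorm p ζ) < 1/2 := hδ₂small _ (by positivity) h2d
    have hconst : (↑Cs : lp (fun _ : ℕ => Y) (ENNReal.ofReal p)) =
        interleave hp e (fun _ : Γ ⧸ H => ‖C‖⁻¹ • mY) := by
      show Chat = _
      rw [hChat, hC, interleave_smul hp e]
    have hΦsymm_coord : ∀ (y : Metric.sphere (0 : lp (fun _ : ℕ => Y) (ENNReal.ofReal p)) 1)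
        (i : ℕ), (↑(Φ.symm y) : lp (fun _ : ℕ => X) (ENNReal.ofReal p)) i
          = canExt (⇑φ.symm) ((↑y : lp (fun _ : ℕ => Y) (ENNReal.ofReal p)) i) := by
      intro y i
      have h1 := hΦ (Φ.symm y) i
      rw [Equiv.apply_symm_apply] at h1
      have h2 := congrArg (canExt (⇑φ.symm)) h1
      rw [canExt_symm_canExt φ] at h2
      exact h2.symm
    have hD : (↑(Φ.symm Cs) : lp (fun _ : ℕ => X) (ENNReal.ofReal p)) =
        interleave hp e (fun _ : Γ ⧸ H => canExt (⇑Φ.symm) (‖C‖⁻¹ • mY)) :=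
      Psi_interleave hp e (⇑φ.symm) (⇑Φ.symm) hΦsymm_coord
        (fun _ => ‖C‖⁻¹ • mY) Cs hconst
    have hAD : ‖(↑A : lp (fun _ : ℕ => X) (ENNReal.ofReal p)) - ↑(Φ.symm Cs)‖
        = pnorm p (fun v : Γ ⧸ H => ξh v - canExt (⇑Φ.symm) (‖C‖⁻¹ • mY)) := by
      rw [hD]
      show ‖interleave hp e ξh - interleave hp e _‖ = _
      rw [interleave_sub hp e, norm_interleave hp e]
    have hlb : (1:ℝ) ≤ 2 * pnorm p (fun v : Γ ⧸ H =>
        ξh v - canExt (⇑Φ.symm) (‖C‖⁻¹ • mY)) := by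
      have h1 := pnorm_zero_sum hp hξhsum (canExt (⇑Φ.symm) (‖C‖⁻¹ • mY))
      rwa [hξhnorm] at h1
    have hsmall2 : ‖(↑A : lp (fun _ : ℕ => X) (ENNReal.ofReal p)) - ↑(Φ.symm Cs)‖ < 1/2 :=
      lt_of_le_of_lt (hδ2app.trans harg2) hsmall
    rw [hAD] at hsmall2
    linarith
  -- conclusion
  have hdpos : 0 < pnorm p ζ := lt_of_lt_of_le (by positivity) hheart
  have hζne : ζ ≠ 0 := by
    intro h
    have h1 : pnorm p ζ = 0 := by
      rw [h]; exact pnorm_zero hp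
    linarith
  have hκle : κY ≤ sSup {t : ℝ | ∃ s ∈ S,
      t = (∑ v : Γ ⧸ H, ‖ζ (s⁻¹ • v) - ζ v‖ ^ p) ^ (1/p) /
          (∑ v : Γ ⧸ H, ‖ζ v‖ ^ p) ^ (1/p)} := by
    rw [hκYdef, hYrfl]
    exact csInf_le ⟨0, fun x hx => dispConst_set_nonneg Γ H S Y p x hx⟩
      ⟨ζ, hζne, hζsum, rfl⟩
  have hsup_le : sSup {t : ℝ | ∃ s ∈ S,
      t = (∑ v : Γ ⧸ H, ‖ζ (s⁻¹ • v) - ζ v‖ ^ p) ^ (1/p) /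
          (∑ v : Γ ⧸ H, ‖ζ v‖ ^ p) ^ (1/p)} ≤ δ₁ r / pnorm p ζ := by
    apply Real.sSup_le _ (div_nonneg (hδ₁.2.1 r hr0 hr2) (pnorm_nonneg _))
    rintro t ⟨s, hs, rfl⟩
    have h1 : (fun v : Γ ⧸ H => ζ (s⁻¹ • v) - ζ v) = fun v => η (s⁻¹ • v) - η v := by
      funext v; rw [hζ]; dsimp only; abel
    have h2 : pnorm p (fun v : Γ ⧸ H => ζ (s⁻¹ • v) - ζ v) ≤ δ₁ r := by
      rw [h1]; exact hkey s hs
    show pnorm p (fun v : Γ ⧸ H => ζ (s⁻¹ • v) - ζ v) / pnorm p ζ ≤ δ₁ r / pnorm p ζ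
    exact (div_le_div_iff_of_pos_right hdpos).mpr h2
  have hfinal : (1/2) * m₂ * κY ≤ δ₁ r := by
    have h1 : κY ≤ δ₁ r / pnorm p ζ := hκle.trans hsup_le
    have h2 : (1/2) * m₂ * κY ≤ pnorm p ζ * κY := mul_le_mul_of_nonneg_right hheart hκnn
    have h3 : pnorm p ζ * κY ≤ pnorm p ζ * (δ₁ r / pnorm p ζ) :=
      mul_le_mul_of_nonneg_left h1 hdpos.le
    have h4 : pnorm p ζ * (δ₁ r / pnorm p ζ) = δ₁ r := by
      field_simp
    linarith
  exact csInf_le ⟨0, fun x hx => hx.1.1⟩ ⟨⟨hr0, hr2⟩, hfinal⟩
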